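/- Let k ≥ 2. Color each edge {v,w} of ST_k^2 with the unique position i ∈ {1,…,2k−1} such that w is obtained from v by transposing positions 0 and i, and color each vertex v with the unique σ(v) ∈ {1,…,2k−1} such that v_{σ(v)} = v_0. Then this assignment is a total coloring of ST_k^2 with color set {1,…,2k−1}, and it is efficient: for every vertex v, the 2k−1 vertex colors assigned to v and its 2k−2 neighbors are pairwise distinct, hence comprise all of {1,…,2k−1}. Moreover the vertex color class of color i is exactly Σ_i^k. -/

import Mathlib

/-- A string of length `k*l` over the alphabet `Fin k` in which every symbol
occurs exactly `l` times (an `l`-set permutation). -/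
def IsMSP (k l : ℕ) (v : Fin (k * l) → Fin k) : Prop :=
  ∀ a : Fin k, (Finset.univ.filter fun i => v i = a).card = l

/-- The vertex set of the star `l`-set transposition graph `ST_k^l`. -/
abbrev MSP (k l : ℕ) : Type := {v : Fin (k * l) → Fin k // IsMSP k l v}

/-- Star-transposition adjacency: `w` is obtained from `v` by transposing position `0`
with a position `i ≠ 0` whose entry differs from that of position `0`. -/
def STAdj (k l : ℕ) (v w : Fin (k * l) → Fin k) : Prop :=
  ∃ i j : Fin (k * l), (j : ℕ) = 0 ∧ i ≠ j ∧ v i ≠ v j ∧ w = v ∘ Equiv.swap j i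

/-- The star `l`-set transposition graph `ST_k^l`. -/
def STGraph (k l : ℕ) : SimpleGraph (MSP k l) :=
  SimpleGraph.fromRel fun v w => STAdj k l v.1 w.1


/-! In a 2-set permutation every position `p` has exactly one twin, the other position carrying
the symbol at `p`; the vertex color of `v` is the twin of position `0`. Transposing `0` with `i`
turns the twin of `i` in `v` into the twin of `0` in the neighbour, so the neighbours of `v`
receive the twins of the positions `i` with `v i ≠ v 0`: every nonzero position except `sig v`,
each exactly once. -/

open Equiv

section Twin

variable {α β : Type*}

def IsTwin (v : α → β) (p q : α) : Prop :=
  q ≠ p ∧ v q = v p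

theorem IsTwin.symm {v : α → β} {p q : α} (h : IsTwin v p q) : IsTwin v q p :=
  ⟨h.1.symm, h.2.symm⟩

variable [DecidableEq α]

theorem IsTwin.comp_swap {v : α → β} {z i s : α} (hvi : v i ≠ v z) (h : IsTwin v i s) :
    IsTwin (v ∘ swap z i) z s := by
  have hsz : s ≠ z := fun hsz => hvi (hsz ▸ h.2).symm
  refine ⟨hsz, ?_⟩
  simp [swap_apply_of_ne_of_ne hsz h.1, h.2]

theorem comp_swap_eq_self_of_apply_eq {v : α → β} {z i : α} (h : v i = v z) :
    v ∘ swap z i = v := by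
  funext x
  rcases eq_or_ne x z with rfl | hxz
  · simp [h]
  rcases eq_or_ne x i with rfl | hxi
  · simp [h]
  · simp [swap_apply_of_ne_of_ne hxz hxi]

end Twin

namespace IsMSP

variable {k l : ℕ} {v : Fin (k * l) → Fin k}

theorem comp_perm (hv : IsMSP k l v) (e : Perm (Fin (k * l))) : IsMSP k l (v ∘ e) :=
  fun a => (Finset.card_equiv e (by simp)).trans (hv a)

variable {v : Fin (k * 2) → Fin k}

theorem exists_isTwin (hv : IsMSP k 2 v) (p : Fin (k * 2)) : ∃ q, IsTwin v p q := by
  obtain ⟨a, ha, b, hb, hab⟩ :=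
    Finset.one_lt_card.1 (show 1 < (Finset.univ.filter fun i => v i = v p).card by
      rw [hv (v p)]; norm_num)
  simp only [Finset.mem_filter, Finset.mem_univ, true_and] at ha hb
  by_cases hap : a = p
  · exact ⟨b, fun h => hab (hap.trans h.symm), hb⟩
  · exact ⟨a, hap, ha⟩

theorem isTwin_unique (hv : IsMSP k 2 v) {p a b : Fin (k * 2)} (ha : IsTwin v p a)
    (hb : IsTwin v p b) : a = b := by
  by_contra hab
  have : 2 < (Finset.univ.filter fun i => v i = v p).card :=
    Finset.two_lt_card.2 ⟨p, by simp, a, by simp [ha.2], b, by simp [hb.2],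
      ha.1.symm, hb.1.symm, hab⟩
  rw [hv (v p)] at this
  exact lt_irrefl 2 this

end IsMSP

theorem stGraph_adj_iff {k l : ℕ} {z : Fin (k * l)} (hz : (z : ℕ) = 0) {v w : MSP k l} :
    (STGraph k l).Adj v w ↔ ∃ i, v.1 i ≠ v.1 z ∧ w.1 = v.1 ∘ swap z i := by
  have hSTAdj : ∀ v w : Fin (k * l) → Fin k,
      STAdj k l v w ↔ ∃ i, v i ≠ v z ∧ w = v ∘ swap z i := by
    intro v w
    constructor
    · rintro ⟨i, j, hj, -, hvij, rfl⟩
      obtain rfl : j = z := Fin.ext (hj.trans hz.symm)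
      exact ⟨i, hvij, rfl⟩
    · rintro ⟨i, hvi, rfl⟩
      exact ⟨i, z, hz, fun h => hvi (h ▸ rfl), hvi, rfl⟩
  rw [STGraph, SimpleGraph.fromRel_adj, hSTAdj, hSTAdj]
  constructor
  · rintro ⟨-, ⟨i, hvi, hw⟩ | ⟨i, hwi, hv⟩⟩
    · exact ⟨i, hvi, hw⟩
    · refine ⟨i, ?_, ?_⟩
      · simpa [hv, eq_comm] using hwi
      · funext x
        simp [hv]
  · rintro ⟨i, hvi, hw⟩
    refine ⟨fun hvw => hvi ?_, Or.inl ⟨i, hvi, hw⟩⟩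
    simpa [← hvw] using (congrFun hw z).symm

section TwinColoring

variable {k : ℕ} {z : Fin (k * 2)} {sig : MSP k 2 → Fin (k * 2)}

theorem sig_eq_iff (hsig : ∀ v, IsTwin v.1 z (sig v)) {v : MSP k 2} {i : Fin (k * 2)}
    (hi : i ≠ z) : sig v = i ↔ v.1 z = v.1 i :=
  ⟨by rintro rfl; exact (hsig v).2.symm, fun h => v.2.isTwin_unique (hsig v) ⟨hi, h.symm⟩⟩

theorem isTwin_sig_of_comp_swap (hsig : ∀ v, IsTwin v.1 z (sig v)) {v w : MSP k 2}
    {i : Fin (k * 2)} (hvi : v.1 i ≠ v.1 z) (hw : w.1 = v.1 ∘ swap z i) :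
    IsTwin v.1 i (sig w) := by
  obtain ⟨t, ht⟩ := v.2.exists_isTwin i
  have htw : IsTwin w.1 z t := hw ▸ ht.comp_swap hvi
  rwa [w.2.isTwin_unique (hsig w) htw]

theorem sig_ne_of_comp_swap (hsig : ∀ v, IsTwin v.1 z (sig v)) {v w : MSP k 2}
    {i : Fin (k * 2)} (hvi : v.1 i ≠ v.1 z) (hw : w.1 = v.1 ∘ swap z i) : sig v ≠ sig w := by
  intro h
  exact hvi ((isTwin_sig_of_comp_swap hsig hvi hw).2.symm.trans (h ▸ (hsig v).2))

theorem eq_of_sig_comp_swap_eq (hsig : ∀ v, IsTwin v.1 z (sig v)) {v w₁ w₂ : MSP k 2}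
    {i j : Fin (k * 2)} (hvi : v.1 i ≠ v.1 z) (hvj : v.1 j ≠ v.1 z)
    (hw₁ : w₁.1 = v.1 ∘ swap z i) (hw₂ : w₂.1 = v.1 ∘ swap z j) (h : sig w₁ = sig w₂) :
    i = j :=
  v.2.isTwin_unique (isTwin_sig_of_comp_swap hsig hvi hw₁).symm
    (h ▸ (isTwin_sig_of_comp_swap hsig hvj hw₂).symm)

theorem exists_sig_comp_swap_eq (hsig : ∀ v, IsTwin v.1 z (sig v)) (v : MSP k 2)
    {c : Fin (k * 2)} (hcz : c ≠ z) (hc : c ≠ sig v) :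
    ∃ i, v.1 i ≠ v.1 z ∧ sig ⟨v.1 ∘ swap z i, v.2.comp_perm _⟩ = c := by
  obtain ⟨i, hi⟩ := v.2.exists_isTwin c
  have hvi : v.1 i ≠ v.1 z :=
    hi.2.trans_ne fun h => hc ((sig_eq_iff hsig hcz).2 h.symm).symm
  exact ⟨i, hvi, v.2.isTwin_unique (isTwin_sig_of_comp_swap hsig hvi rfl) hi.symm⟩

theorem sig_ne_of_adj (hsig : ∀ v, IsTwin v.1 z (sig v)) (hz : (z : ℕ) = 0) {v w : MSP k 2}
    (h : (STGraph k 2).Adj v w) : sig v ≠ sig w := by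
  obtain ⟨i, hvi, hw⟩ := (stGraph_adj_iff hz).1 h
  exact sig_ne_of_comp_swap hsig hvi hw

theorem sig_ne_of_adj_of_comp_swap (hsig : ∀ v, IsTwin v.1 z (sig v)) {v w : MSP k 2}
    {i : Fin (k * 2)} (h : (STGraph k 2).Adj v w) (hw : w.1 = v.1 ∘ swap z i) :
    sig v ≠ i ∧ sig w ≠ i := by
  have hvi : v.1 i ≠ v.1 z := fun hvi =>
    h.ne (Subtype.ext (hw.trans (comp_swap_eq_self_of_apply_eq hvi)).symm)
  exact ⟨fun hi => hvi (hi ▸ (hsig v).2), (isTwin_sig_of_comp_swap hsig hvi hw).1⟩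

theorem injOn_sig_closedNeighborhood (hsig : ∀ v, IsTwin v.1 z (sig v)) (hz : (z : ℕ) = 0)
    (v : MSP k 2) : Set.InjOn sig (insert v ((STGraph k 2).neighborSet v)) := by
  rintro x (rfl | hx) y (rfl | hy) hxy
  · rfl
  · exact absurd hxy (sig_ne_of_adj hsig hz hy)
  · exact absurd hxy.symm (sig_ne_of_adj hsig hz hx)
  · obtain ⟨i, hvi, hx⟩ := (stGraph_adj_iff hz).1 hx
    obtain ⟨j, hvj, hy⟩ := (stGraph_adj_iff hz).1 hy
    obtain rfl := eq_of_sig_comp_swap_eq hsig hvi hvj hx hy hxy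
    exact Subtype.ext (hx.trans hy.symm)

theorem exists_mem_closedNeighborhood_sig_eq (hsig : ∀ v, IsTwin v.1 z (sig v))
    (hz : (z : ℕ) = 0) (v : MSP k 2) {c : Fin (k * 2)} (hcz : c ≠ z) :
    ∃ w ∈ insert v ((STGraph k 2).neighborSet v), sig w = c := by
  by_cases hc : c = sig v
  · exact ⟨v, Set.mem_insert v _, hc.symm⟩
  obtain ⟨i, hvi, hsig_i⟩ := exists_sig_comp_swap_eq hsig v hcz hc
  exact ⟨_, Set.mem_insert_of_mem v ((stGraph_adj_iff hz).2 ⟨i, hvi, rfl⟩), hsig_i⟩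

end TwinColoring

/-- coloring edges of `ST_k^2` by their transposition position and each vertex
`v` by the unique `σ(v) ≠ 0` with `v_{σ(v)} = v_0` is a total coloring with colors
`{1,...,2k-1}` which is efficient: the vertex colors on each closed neighborhood are pairwise
distinct, hence comprise all of `{1,...,2k-1}`; and the color class of `i` is exactly `Σ_i^k`. -/
theorem stmt13 (k : ℕ) (hk : 2 ≤ k)
    (sig : MSP k 2 → Fin (k * 2))
    (hsig : ∀ v : MSP k 2, (sig v : ℕ) ≠ 0 ∧ v.1 (sig v) = v.1 ⟨0, by omega⟩) :
    (∀ v w : MSP k 2, (STGraph k 2).Adj v w → sig v ≠ sig w) ∧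
    (∀ (u v w : MSP k 2) (i j : Fin (k * 2)),
      (STGraph k 2).Adj u v → (STGraph k 2).Adj u w → v ≠ w →
      v.1 = u.1 ∘ Equiv.swap ⟨0, by omega⟩ i →
      w.1 = u.1 ∘ Equiv.swap ⟨0, by omega⟩ j → i ≠ j) ∧
    (∀ (v w : MSP k 2) (i : Fin (k * 2)), (STGraph k 2).Adj v w →
      w.1 = v.1 ∘ Equiv.swap ⟨0, by omega⟩ i → sig v ≠ i ∧ sig w ≠ i) ∧
    (∀ v : MSP k 2, Set.InjOn sig (insert v ((STGraph k 2).neighborSet v))) ∧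
    (∀ v : MSP k 2, ∀ c : Fin (k * 2), (c : ℕ) ≠ 0 →
      ∃ w ∈ insert v ((STGraph k 2).neighborSet v), sig w = c) ∧
    (∀ i : Fin (k * 2), (i : ℕ) ≠ 0 →
      {v : MSP k 2 | sig v = i} = {v : MSP k 2 | v.1 ⟨0, by omega⟩ = v.1 i}) := by
  set z : Fin (k * 2) := ⟨0, by omega⟩
  have hz : (z : ℕ) = 0 := rfl
  have ne_z {i : Fin (k * 2)} (hi : (i : ℕ) ≠ 0) : i ≠ z := fun h => hi (h ▸ hz)
  have hsig' (v : MSP k 2) : IsTwin v.1 z (sig v) := ⟨ne_z (hsig v).1, (hsig v).2⟩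
  refine ⟨fun v w => sig_ne_of_adj hsig' hz, ?_, fun v w i => sig_ne_of_adj_of_comp_swap hsig',
    injOn_sig_closedNeighborhood hsig' hz,
    fun v c hc => exists_mem_closedNeighborhood_sig_eq hsig' hz v (ne_z hc),
    fun i hi => Set.ext fun v => sig_eq_iff hsig' (ne_z hi)⟩
  rintro u v w i j - - hvw hv hw rfl
  exact hvw (Subtype.ext (hv.trans hw.symm))
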